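/- arXiv:1903.02160 — 6 statements merged into one kernel-verified Lean document; each statement's English description precedes it below -/
import Mathlib

section
/- Let n ≥ 2, let 0 < r < 1 and z = √(1 − r²) (so z ≠ 0). Then there exist a positive real number Ω₊ and a negative real number Ω₋ such that for Ω = Ω₊ and for Ω = Ω₋ the curves q_i(t) = (r cos(Ωt + 2π(i−1)/n), r sin(Ωt + 2π(i−1)/n), z), i = 1,…,n, form a solution of the curved n-body equations on S²; i.e., the regular polygon of n equal masses at constant height z ≠ 0 admits relative equilibrium solutions with both a positive and a negative angular velocity. -/
open Real

noncomputable section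

/-- Euclidean inner product on `ℝ³ = ℝ × ℝ × ℝ`. -/
def dot3 (a b : ℝ × ℝ × ℝ) : ℝ := a.1 * b.1 + a.2.1 * b.2.1 + a.2.2 * b.2.2

/-- The curved `n`-body problem on the unit sphere `S² ⊂ ℝ³` (curvature `+1`), equal
masses `mᵢ = 1`:  the curves stay on the sphere and satisfy
`q̈ᵢ = Σ_{j≠i} (qⱼ − (qᵢ·qⱼ) qᵢ)/(1 − (qᵢ·qⱼ)²)^{3/2} − (q̇ᵢ·q̇ᵢ) qᵢ`. -/
def IsSphereSolution (n : ℕ) (q : Fin n → ℝ → ℝ × ℝ × ℝ) : Prop :=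
  (∀ i t, dot3 (q i t) (q i t) = 1) ∧
  ∀ i t, deriv (deriv (q i)) t =
    (∑ j ∈ Finset.univ.erase i,
      (1 / (1 - dot3 (q i t) (q j t) ^ 2) ^ ((3 : ℝ) / 2)) •
        (q j t - dot3 (q i t) (q j t) • q i t))
    - dot3 (deriv (q i) t) (deriv (q i) t) • q i t

/-- The regular `n`-gon configuration rotating with angular velocity `Ω` on the circle of
radius `r` at height `z = √(1 − r²)` on the unit sphere (bodies indexed by
`i = 0,…,n−1`, corresponding to `i = 1,…,n` in the paper). -/
def polygonS (n : ℕ) (r Ω : ℝ) (i : Fin n) (t : ℝ) : ℝ × ℝ × ℝ :=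
  (r * Real.cos (Ω * t + 2 * π * ((i : ℕ) : ℝ) / n),
   r * Real.sin (Ω * t + 2 * π * ((i : ℕ) : ℝ) / n),
   Real.sqrt (1 - r ^ 2))

/-! Put `φᵢ = Ωt + 2πi/n`. Two bodies at angular distance `δ` on the parallel of radius `r`
have `qᵢ·qⱼ = r² cos δ + z²`, and `qⱼ − (qᵢ·qⱼ) qᵢ` splits into `(1 − cos δ) u + (sin δ) v`
for two vectors `u`, `v` depending only on `φᵢ`. Summed over `j ≠ i`, the coefficients of `v`
cancel in pairs `δ ↔ −δ`, and the coefficients of `u` add up to a positive constant `C`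
independent of `i`. The equations of motion then reduce to `Ω² = C`, solved by `Ω = ±√C`. -/

open Finset Function

def vertexAngle (n : ℕ) (i : Fin n) : ℝ := 2 * π * (i : ℕ) / n

section PolygonSums

variable {n : ℕ}

@[simp]
lemma vertexAngle_zero [NeZero n] : vertexAngle n 0 = 0 := by
  simp [vertexAngle]

lemma Function.Periodic.apply_vertexAngle_sub {f : ℝ → ℝ} (hf : f.Periodic (2 * π))
    (i j : Fin n) : f (vertexAngle n i - vertexAngle n j) = f (vertexAngle n (i - j)) := by
  rcases le_or_gt j i with hji | hij
  · rw [vertexAngle, vertexAngle, vertexAngle, Fin.coe_sub_iff_le.2 hji, Nat.cast_sub hji,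
      mul_sub, sub_div]
  · have hn : (n : ℝ) ≠ 0 := Nat.cast_ne_zero.2 i.pos.ne'
    have hshift : vertexAngle n (i - j) = vertexAngle n i - vertexAngle n j + 2 * π := by
      rw [vertexAngle, vertexAngle, vertexAngle, Fin.coe_sub_iff_lt.2 hij,
        Nat.cast_sub (by omega), Nat.cast_add]
      field_simp
      ring
    rw [hshift, hf]

variable [NeZero n]

lemma sum_erase_apply_vertexAngle_sub {f : ℝ → ℝ} (hf : f.Periodic (2 * π)) (i : Fin n) :
    ∑ j ∈ univ.erase i, f (vertexAngle n i - vertexAngle n j) =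
      ∑ k ∈ univ.erase 0, f (vertexAngle n k) :=
  sum_equiv (Equiv.subLeft i) (by simp [sub_eq_zero, eq_comm])
    fun j _ => hf.apply_vertexAngle_sub i j

lemma sum_erase_apply_vertexAngle_sub_eq_zero {f : ℝ → ℝ} (hf : f.Periodic (2 * π))
    (hodd : f.Odd) (i : Fin n) :
    ∑ j ∈ univ.erase i, f (vertexAngle n i - vertexAngle n j) = 0 := by
  have h := sum_erase_apply_vertexAngle_sub hf (0 : Fin n)
  simp only [vertexAngle_zero, zero_sub, hodd _, sum_neg_distrib] at h
  rw [sum_erase_apply_vertexAngle_sub hf i]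
  linarith

lemma cos_vertexAngle_lt_one {k : Fin n} (hk : k ≠ 0) : cos (vertexAngle n k) < 1 := by
  have hn : (0 : ℝ) < n := Nat.cast_pos.2 (NeZero.pos n)
  have hk0 : (0 : ℝ) < (k : ℕ) := Nat.cast_pos.2 (Nat.pos_of_ne_zero (Fin.val_ne_zero_iff.2 hk))
  have hkn : ((k : ℕ) : ℝ) < n := Nat.cast_lt.2 k.isLt
  have hpos : 0 < vertexAngle n k := by unfold vertexAngle; positivity
  have hlt : vertexAngle n k < 2 * π := by
    rw [vertexAngle, div_lt_iff₀ hn]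
    nlinarith [pi_pos]
  refine (Real.cos_le_one _).lt_of_ne fun h => hpos.ne' ?_
  exact (Real.cos_eq_one_iff_of_lt_of_lt (by linarith [pi_pos]) hlt).1 h

end PolygonSums

/-- The factor `1 / (1 − (qᵢ·qⱼ)²)^{3/2}`, where `qᵢ·qⱼ = r² cos δ + z²` for two bodies at angular
distance `δ` on the parallel of radius `r`. -/
def interactionCoeff (r δ : ℝ) : ℝ :=
  1 / (1 - (r ^ 2 * cos δ + (1 - r ^ 2)) ^ 2) ^ ((3 : ℝ) / 2)

lemma interactionCoeff_periodic (r : ℝ) : (interactionCoeff r).Periodic (2 * π) := by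
  intro δ
  simp only [interactionCoeff, Real.cos_add_two_pi]

lemma interactionCoeff_even (r : ℝ) : (interactionCoeff r).Even := by
  intro δ
  simp only [interactionCoeff, Real.cos_neg]

lemma interactionCoeff_pos {r δ : ℝ} (hr0 : 0 < r) (hr1 : r < 1) (hδ : cos δ < 1) :
    0 < interactionCoeff r δ := by
  have hgap : 0 < r ^ 2 * (1 - cos δ) := mul_pos (pow_pos hr0 2) (sub_pos.2 hδ)
  have hgap' : r ^ 2 * (1 - cos δ) < 2 := by
    nlinarith [Real.neg_one_le_cos δ, pow_lt_one₀ hr0.le hr1 two_ne_zero]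
  have hbase : 0 < 1 - (r ^ 2 * cos δ + (1 - r ^ 2)) ^ 2 := by
    nlinarith [mul_pos hgap (sub_pos.2 hgap')]
  exact one_div_pos.2 (Real.rpow_pos_of_pos hbase _)

def angularVelocitySq (n : ℕ) [NeZero n] (r : ℝ) : ℝ :=
  ∑ k ∈ univ.erase (0 : Fin n),
    interactionCoeff r (vertexAngle n k) * (1 - cos (vertexAngle n k))

lemma angularVelocitySq_pos {n : ℕ} [NeZero n] (hn : 2 ≤ n) {r : ℝ} (hr0 : 0 < r)
    (hr1 : r < 1) : 0 < angularVelocitySq n r := by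
  have : Nontrivial (Fin n) := Fin.nontrivial_iff_two_le.2 hn
  refine sum_pos (fun k hk => ?_) ((erase_nonempty (mem_univ 0)).2 (univ_nontrivial_iff.2 this))
  have hcos := cos_vertexAngle_lt_one (ne_of_mem_erase hk)
  exact mul_pos (interactionCoeff_pos hr0 hr1 hcos) (sub_pos.2 hcos)

/-- The velocity is again a circular motion (phase shifted by `π / 2`), so this lemma also
differentiates it. -/
lemma hasDerivAt_circular (a z Ω c t : ℝ) :
    HasDerivAt (fun s => ((a * cos (Ω * s + c), a * sin (Ω * s + c), z) : ℝ × ℝ × ℝ))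
      (a * Ω * cos (Ω * t + (c + π / 2)), a * Ω * sin (Ω * t + (c + π / 2)), 0) t := by
  have hφ : HasDerivAt (fun s => Ω * s + c) Ω t := by
    simpa using ((hasDerivAt_id t).const_mul Ω).add_const c
  refine ((hφ.cos.const_mul a).prodMk ((hφ.sin.const_mul a).prodMk
    (hasDerivAt_const t z))).congr_deriv ?_
  rw [← add_assoc, Real.cos_add_pi_div_two, Real.sin_add_pi_div_two]
  simp only [Prod.mk.injEq, and_true]
  exact ⟨by ring, by ring⟩

section Polygon

variable {n : ℕ} {r : ℝ} (Ω : ℝ)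

lemma polygonS_apply (i : Fin n) (t : ℝ) :
    polygonS n r Ω i t =
      (r * cos (Ω * t + vertexAngle n i), r * sin (Ω * t + vertexAngle n i), √(1 - r ^ 2)) :=
  rfl

lemma deriv_polygonS (i : Fin n) :
    deriv (polygonS n r Ω i) = fun t =>
      (r * Ω * cos (Ω * t + (vertexAngle n i + π / 2)),
        r * Ω * sin (Ω * t + (vertexAngle n i + π / 2)), 0) :=
  funext fun t => (hasDerivAt_circular r _ Ω (vertexAngle n i) t).deriv

lemma deriv_deriv_polygonS (i : Fin n) (t : ℝ) :
    deriv (deriv (polygonS n r Ω i)) t =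
      (-(Ω ^ 2 * (r * cos (Ω * t + vertexAngle n i))),
        -(Ω ^ 2 * (r * sin (Ω * t + vertexAngle n i))), 0) := by
  rw [deriv_polygonS, (hasDerivAt_circular (r * Ω) 0 Ω _ t).deriv,
    show Ω * t + (vertexAngle n i + π / 2 + π / 2) = Ω * t + vertexAngle n i + π by ring,
    Real.cos_add_pi, Real.sin_add_pi]
  simp only [Prod.mk.injEq, and_true]
  exact ⟨by ring, by ring⟩

lemma dot3_deriv_polygonS (i : Fin n) (t : ℝ) :
    dot3 (deriv (polygonS n r Ω i) t) (deriv (polygonS n r Ω i) t) = r ^ 2 * Ω ^ 2 := by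
  rw [deriv_polygonS]
  simp only [dot3]
  linear_combination (r * Ω) ^ 2 * Real.sin_sq_add_cos_sq (Ω * t + (vertexAngle n i + π / 2))

lemma dot3_polygonS (hr : r ^ 2 ≤ 1) (i j : Fin n) (t : ℝ) :
    dot3 (polygonS n r Ω i t) (polygonS n r Ω j t) =
      r ^ 2 * cos (vertexAngle n i - vertexAngle n j) + (1 - r ^ 2) := by
  have hz := Real.mul_self_sqrt (sub_nonneg.2 hr)
  have hδ : vertexAngle n i - vertexAngle n j =
      (Ω * t + vertexAngle n i) - (Ω * t + vertexAngle n j) := by ring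
  simp only [dot3, polygonS_apply]
  rw [hz, hδ, Real.cos_sub]
  ring

lemma polygonS_sub_smul (i j : Fin n) (t : ℝ) :
    polygonS n r Ω j t -
        (r ^ 2 * cos (vertexAngle n i - vertexAngle n j) + (1 - r ^ 2)) •
          polygonS n r Ω i t =
      (1 - cos (vertexAngle n i - vertexAngle n j)) •
          ((-((1 - r ^ 2) * (r * cos (Ω * t + vertexAngle n i))),
            -((1 - r ^ 2) * (r * sin (Ω * t + vertexAngle n i))),
            r ^ 2 * √(1 - r ^ 2)) : ℝ × ℝ × ℝ) +
        sin (vertexAngle n i - vertexAngle n j) •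
          ((r * sin (Ω * t + vertexAngle n i),
            -(r * cos (Ω * t + vertexAngle n i)), 0) : ℝ × ℝ × ℝ) := by
  have hφ : Ω * t + vertexAngle n j =
      (Ω * t + vertexAngle n i) - (vertexAngle n i - vertexAngle n j) := by ring
  rw [polygonS_apply, polygonS_apply, hφ, Real.cos_sub (Ω * t + vertexAngle n i), Real.sin_sub (Ω * t + vertexAngle n i)]
  simp only [Prod.smul_mk, Prod.mk_sub_mk, Prod.mk_add_mk, smul_eq_mul, Prod.mk.injEq]
  exact ⟨by ring, by ring, by ring⟩

variable [NeZero n]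

lemma sum_interaction_polygonS (hr : r ^ 2 ≤ 1) (i : Fin n) (t : ℝ) :
    ∑ j ∈ univ.erase i,
        (1 / (1 - dot3 (polygonS n r Ω i t) (polygonS n r Ω j t) ^ 2) ^ ((3 : ℝ) / 2)) •
          (polygonS n r Ω j t - dot3 (polygonS n r Ω i t) (polygonS n r Ω j t) •
            polygonS n r Ω i t) =
      angularVelocitySq n r •
        ((-((1 - r ^ 2) * (r * cos (Ω * t + vertexAngle n i))),
          -((1 - r ^ 2) * (r * sin (Ω * t + vertexAngle n i))),
          r ^ 2 * √(1 - r ^ 2)) : ℝ × ℝ × ℝ) := by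
  set u : ℝ × ℝ × ℝ := (-((1 - r ^ 2) * (r * cos (Ω * t + vertexAngle n i))),
    -((1 - r ^ 2) * (r * sin (Ω * t + vertexAngle n i))), r ^ 2 * √(1 - r ^ 2))
  set v : ℝ × ℝ × ℝ := (r * sin (Ω * t + vertexAngle n i),
    -(r * cos (Ω * t + vertexAngle n i)), 0)
  set G : ℝ → ℝ := fun δ => interactionCoeff r δ * (1 - cos δ)
  set H : ℝ → ℝ := fun δ => interactionCoeff r δ * sin δ
  have hG : G.Periodic (2 * π) := fun δ => by
    simp only [G, interactionCoeff_periodic r δ, Real.cos_periodic δ]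
  have hH : H.Periodic (2 * π) := fun δ => by
    simp only [H, interactionCoeff_periodic r δ, Real.sin_periodic δ]
  have hHodd : H.Odd := fun δ => by
    simp only [H, interactionCoeff_even r δ, Real.sin_neg, mul_neg]
  calc _ = ∑ j ∈ univ.erase i, (G (vertexAngle n i - vertexAngle n j) • u +
          H (vertexAngle n i - vertexAngle n j) • v) := by
        refine sum_congr rfl fun j _ => ?_
        rw [dot3_polygonS Ω hr, polygonS_sub_smul, smul_add, smul_smul, smul_smul]
        rfl
    _ = angularVelocitySq n r • u + (0 : ℝ) • v := by
        rw [sum_add_distrib, ← sum_smul, ← sum_smul, sum_erase_apply_vertexAngle_sub hG,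
          sum_erase_apply_vertexAngle_sub_eq_zero hH hHodd]
        rfl
    _ = angularVelocitySq n r • u := by rw [zero_smul, add_zero]

theorem isSphereSolution_polygonS (hr : r ^ 2 ≤ 1) (hΩ : Ω ^ 2 = angularVelocitySq n r) :
    IsSphereSolution n (polygonS n r Ω) := by
  refine ⟨fun i t => ?_, fun i t => ?_⟩
  · rw [dot3_polygonS Ω hr, sub_self, Real.cos_zero]
    ring
  rw [deriv_deriv_polygonS, dot3_deriv_polygonS, sum_interaction_polygonS Ω hr, ← hΩ,
    polygonS_apply]
  simp only [Prod.smul_mk, Prod.mk_sub_mk, smul_eq_mul, Prod.mk.injEq]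
  exact ⟨by ring, by ring, by ring⟩

end Polygon

/-- For `n` equal masses on `S²` in a regular polygon configuration at height
`z = √(1 − r²) ≠ 0` (i.e. `0 < r < 1`), there exist a positive and a negative angular
velocity making the rotating polygon a relative equilibrium solution. -/
theorem polygon_relative_equilibrium_exists_sphere
    (n : ℕ) (hn : 2 ≤ n) (r : ℝ) (hr0 : 0 < r) (hr1 : r < 1) :
    ∃ Ωp Ωm : ℝ, 0 < Ωp ∧ Ωm < 0 ∧
      IsSphereSolution n (polygonS n r Ωp) ∧ IsSphereSolution n (polygonS n r Ωm) := by
  have : NeZero n := ⟨by omega⟩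
  have hC := angularVelocitySq_pos hn hr0 hr1
  have hr : r ^ 2 ≤ 1 := by nlinarith
  exact ⟨√(angularVelocitySq n r), -√(angularVelocitySq n r), Real.sqrt_pos.2 hC,
    neg_neg_of_pos (Real.sqrt_pos.2 hC),
    isSphereSolution_polygonS _ hr (Real.sq_sqrt hC.le),
    isSphereSolution_polygonS _ hr (by rw [neg_sq, Real.sq_sqrt hC.le])⟩
end
end

section
/- Let n ≥ 3 be odd, let 0 < r < 1, z = √(1 − r²), and Ω ∈ ℝ. The curves q_i(t) = (r cos(Ωt + 2π(i−1)/n), r sin(Ωt + 2π(i−1)/n), z), i = 1,…,n, form a solution of the curved n-body equations on S² if and only if Ω² = 2 Σ_{j=1}^{(n−1)/2} (1 − cos(2jπ/n)) / (1 − (r² cos(2jπ/n) + 1 − r²)²)^{3/2}. -/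
/-!
In the frame rotating with body `i`, body `j` sits at the angular offset `δ = 2π(j - i)/n`, and
its force on body `i` splits into a component along the meridian, with coefficient
`(1 - cos δ)/(1 - c²)^{3/2}`, and one along the parallel, with coefficient `sin δ/(1 - c²)^{3/2}`,
where `c = r² cos δ + 1 - r²`. Summed over the polygon the parallel components cancel, since the
offsets come in pairs `±δ`, and the equation of motion reduces to its vertical component
`Ω² = Σ_{k=1}^{n-1} (1 - cos(2πk/n))/(1 - c_k²)^{3/2}`. For odd `n` the same pairing `k ↔ n - k`
shows that this sum is twice its first half.
-/

open Real

noncomputable section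

open Finset

theorem sum_Ico_one_eq_zero_of_antisymm (n : ℕ) (g : ℕ → ℝ)
    (hg : ∀ k ∈ Ico 1 n, g (n - k) = -g k) : ∑ k ∈ Ico 1 n, g k = 0 := by
  have hreflect := sum_Ico_reflect g 1 (Nat.le_succ n)
  rw [Nat.add_sub_cancel_left, Nat.add_sub_cancel, sum_congr rfl hg, sum_neg_distrib] at hreflect
  linarith

theorem sum_Ico_one_eq_two_nsmul_of_symm {M : Type*} [AddCommMonoid M] (m : ℕ) (g : ℕ → M)
    (hg : ∀ k ∈ Ico 1 (m + 1), g (2 * m + 1 - k) = g k) :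
    ∑ k ∈ Ico 1 (2 * m + 1), g k = 2 • ∑ k ∈ Icc 1 m, g k := by
  have hreflect := sum_Ico_reflect g 1 (show m + 1 ≤ 2 * m + 1 + 1 by omega)
  rw [sum_congr rfl hg, show 2 * m + 1 + 1 - (m + 1) = m + 1 by omega,
    Nat.add_sub_cancel] at hreflect
  rw [← sum_Ico_consecutive g (show 1 ≤ m + 1 by omega) (show m + 1 ≤ 2 * m + 1 by omega),
    ← hreflect, two_nsmul, Ico_add_one_right_eq_Icc]

theorem Function.Periodic.apply_mul_cast_sub_div {M : Type*} {f : ℝ → M} {c : ℝ}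
    (hf : Function.Periodic f c) {n k : ℕ} (hn : n ≠ 0) (hk : k ≤ n) :
    f (c * ↑(n - k) / n) = f (-(c * k / n)) := by
  rw [← hf.sub_eq', Nat.cast_sub hk]
  congr 1
  field_simp

theorem sum_Ico_periodic_eq_zero_of_odd {f : ℝ → ℝ} {c : ℝ} (hf : Function.Periodic f c)
    (hodd : Function.Odd f) (n : ℕ) : ∑ k ∈ Ico 1 n, f (c * k / n) = 0 :=
  sum_Ico_one_eq_zero_of_antisymm n _ fun k hk => by
    obtain ⟨-, hkn⟩ := mem_Ico.1 hk
    rw [hf.apply_mul_cast_sub_div (by omega) hkn.le, hodd]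

theorem sum_Ico_periodic_eq_two_nsmul_of_even {M : Type*} [AddCommMonoid M] {f : ℝ → M} {c : ℝ}
    (hf : Function.Periodic f c) (heven : Function.Even f) {n : ℕ} (hn : Odd n) :
    ∑ k ∈ Ico 1 n, f (c * k / n) = 2 • ∑ k ∈ Icc 1 ((n - 1) / 2), f (c * k / n) := by
  obtain ⟨m, rfl⟩ := hn
  rw [show (2 * m + 1 - 1) / 2 = m by omega]
  exact sum_Ico_one_eq_two_nsmul_of_symm m _ fun k hk => by
    obtain ⟨-, hkm⟩ := mem_Ico.1 hk
    rw [hf.apply_mul_cast_sub_div (by omega) (by omega), heven]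

theorem sum_erase_periodic_shift {M : Type*} [AddCommGroup M] {f : ℝ → M} {c : ℝ}
    (hf : Function.Periodic f c) {n : ℕ} (i : Fin n) :
    ∑ j ∈ univ.erase i, f (c * j / n - c * i / n) = ∑ k ∈ Ico 1 n, f (c * k / n) := by
  have hn : 0 < n := i.pos
  have : NeZero n := ⟨hn.ne'⟩
  -- `k + i` in `Fin n` wraps around by a multiple of `n`, i.e. the angle moves by a multiple of `c`
  have hshift (k : Fin n) : f (c * ↑(k + i) / n - c * i / n) = f (c * k / n) := by
    have hmod := Nat.mod_add_div (k + i : ℕ) n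
    rw [← Fin.val_add] at hmod
    have hval : ((k + i : Fin n) : ℝ) = k + i - n * ((k + i : ℕ) / n : ℕ) := by
      rw [eq_sub_iff_add_eq]; exact_mod_cast hmod
    rw [hval]
    convert hf.sub_nat_mul_eq ((k + i : ℕ) / n) using 2
    field_simp
    ring
  rw [sum_erase_eq_sub (mem_univ i), ← Equiv.sum_comp (Equiv.addRight i), Equiv.coe_addRight,
    Fintype.sum_congr _ _ hshift,
    Fin.sum_univ_eq_sum_range (fun k => f (c * k / n)), range_eq_Ico,
    sum_eq_sum_Ico_succ_bot hn, sub_self]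
  simp only [Nat.cast_zero, mul_zero, zero_div, zero_add, add_sub_cancel_left]

def uniformCircle (a Ω φ z t : ℝ) : ℝ × ℝ × ℝ :=
  (a * cos (Ω * t + φ), a * sin (Ω * t + φ), z)

theorem hasDerivAt_uniformCircle (a Ω φ z t : ℝ) :
    HasDerivAt (uniformCircle a Ω φ z) (uniformCircle (a * Ω) Ω (φ + π / 2) 0 t) t := by
  have hθ : HasDerivAt (fun s => Ω * s + φ) Ω t := by
    simpa using ((hasDerivAt_id t).const_mul Ω).add_const φ
  refine ((hθ.cos.const_mul a).prodMk ((hθ.sin.const_mul a).prodMk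
    (hasDerivAt_const t z))).congr_deriv ?_
  simp only [uniformCircle, ← add_assoc, cos_add_pi_div_two, sin_add_pi_div_two, Prod.mk.injEq,
    and_true]
  exact ⟨by ring, by ring⟩

theorem deriv_uniformCircle (a Ω φ z : ℝ) :
    deriv (uniformCircle a Ω φ z) = uniformCircle (a * Ω) Ω (φ + π / 2) 0 :=
  funext fun t => (hasDerivAt_uniformCircle a Ω φ z t).deriv

theorem deriv_deriv_uniformCircle (a Ω φ z t : ℝ) :
    deriv (deriv (uniformCircle a Ω φ z)) t = uniformCircle (-(a * Ω ^ 2)) Ω φ 0 t := by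
  rw [deriv_uniformCircle, deriv_uniformCircle]
  simp only [uniformCircle, show Ω * t + (φ + π / 2 + π / 2) = Ω * t + φ + π by ring, cos_add_pi,
    sin_add_pi, Prod.mk.injEq, and_true]
  exact ⟨by ring, by ring⟩

theorem dot3_uniformCircle (a b Ω φ ψ z w t : ℝ) :
    dot3 (uniformCircle a Ω φ z t) (uniformCircle b Ω ψ w t) = a * b * cos (ψ - φ) + z * w := by
  rw [dot3, uniformCircle, uniformCircle, show ψ - φ = (Ω * t + ψ) - (Ω * t + φ) by ring, cos_sub]
  ring

/-- For `p, q` on the circle of radius `r` at height `z` of the unit sphere, `q - (p·q) p` is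
split into its components along the meridian and along the parallel through `p`. -/
theorem uniformCircle_sub_dot3_smul {r z : ℝ} (h : r ^ 2 + z ^ 2 = 1) (Ω φ ψ t : ℝ) :
    uniformCircle r Ω ψ z t -
        dot3 (uniformCircle r Ω φ z t) (uniformCircle r Ω ψ z t) • uniformCircle r Ω φ z t =
      (1 - cos (ψ - φ)) • uniformCircle (-(r * z ^ 2)) Ω φ (r ^ 2 * z) t +
        sin (ψ - φ) • uniformCircle r Ω (φ + π / 2) 0 t := by
  rw [dot3_uniformCircle]
  simp only [uniformCircle, ← add_assoc, cos_add_pi_div_two, sin_add_pi_div_two, Prod.smul_mk,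
    Prod.mk_sub_mk, Prod.mk_add_mk, smul_eq_mul, Prod.mk.injEq]
  rw [show Ω * t + ψ = Ω * t + φ + (ψ - φ) by ring, cos_add (Ω * t + φ), sin_add (Ω * t + φ)]
  exact ⟨by linear_combination (-(r * cos (Ω * t + φ) * cos (ψ - φ))) * h,
    by linear_combination (-(r * sin (Ω * t + φ) * cos (ψ - φ))) * h,
    by linear_combination (-z) * h⟩

theorem polygonS_eq_uniformCircle (n : ℕ) (r Ω : ℝ) (i : Fin n) :
    polygonS n r Ω i = uniformCircle r Ω (2 * π * i / n) (√(1 - r ^ 2)) :=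
  rfl

def meridionalCoeff (r δ : ℝ) : ℝ :=
  (1 - cos δ) / (1 - (r ^ 2 * cos δ + 1 - r ^ 2) ^ 2) ^ ((3 : ℝ) / 2)

def zonalCoeff (r δ : ℝ) : ℝ :=
  sin δ / (1 - (r ^ 2 * cos δ + 1 - r ^ 2) ^ 2) ^ ((3 : ℝ) / 2)

def sphereForce (p q : ℝ × ℝ × ℝ) : ℝ × ℝ × ℝ :=
  (1 / (1 - dot3 p q ^ 2) ^ ((3 : ℝ) / 2)) • (q - dot3 p q • p)

theorem sphereForce_uniformCircle {r z : ℝ} (h : r ^ 2 + z ^ 2 = 1) (Ω φ ψ t : ℝ) :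
    sphereForce (uniformCircle r Ω φ z t) (uniformCircle r Ω ψ z t) =
      meridionalCoeff r (ψ - φ) • uniformCircle (-(r * z ^ 2)) Ω φ (r ^ 2 * z) t +
        zonalCoeff r (ψ - φ) • uniformCircle r Ω (φ + π / 2) 0 t := by
  rw [sphereForce, uniformCircle_sub_dot3_smul h, dot3_uniformCircle, ← sq, ← sq,
    show z ^ 2 = 1 - r ^ 2 by linarith, ← add_sub_assoc, smul_add, smul_smul, smul_smul,
    meridionalCoeff, zonalCoeff, one_div_mul_eq_div, one_div_mul_eq_div]

theorem meridionalCoeff_periodic (r : ℝ) : Function.Periodic (meridionalCoeff r) (2 * π) :=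
  fun δ => by simp only [meridionalCoeff, cos_add_two_pi]

theorem meridionalCoeff_even (r : ℝ) : Function.Even (meridionalCoeff r) :=
  fun δ => by simp only [meridionalCoeff, cos_neg]

theorem zonalCoeff_periodic (r : ℝ) : Function.Periodic (zonalCoeff r) (2 * π) :=
  fun δ => by simp only [zonalCoeff, cos_add_two_pi, sin_add_two_pi]

theorem zonalCoeff_odd (r : ℝ) : Function.Odd (zonalCoeff r) :=
  fun δ => by simp only [zonalCoeff, cos_neg, sin_neg, neg_div]

theorem sum_sphereForce_polygonS {n : ℕ} {r : ℝ} (hr : r ^ 2 ≤ 1) (Ω : ℝ) (i : Fin n) (t : ℝ) :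
    ∑ j ∈ univ.erase i, sphereForce (polygonS n r Ω i t) (polygonS n r Ω j t) =
      (∑ k ∈ Ico 1 n, meridionalCoeff r (2 * π * k / n)) •
        uniformCircle (-(r * √(1 - r ^ 2) ^ 2)) Ω (2 * π * i / n) (r ^ 2 * √(1 - r ^ 2)) t := by
  have hz : r ^ 2 + √(1 - r ^ 2) ^ 2 = 1 := by rw [sq_sqrt (by linarith)]; ring
  simp only [polygonS_eq_uniformCircle, sphereForce_uniformCircle hz]
  rw [sum_add_distrib, ← sum_smul, ← sum_smul,
    sum_erase_periodic_shift (meridionalCoeff_periodic r),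
    sum_erase_periodic_shift (zonalCoeff_periodic r),
    sum_Ico_periodic_eq_zero_of_odd (zonalCoeff_periodic r) (zonalCoeff_odd r), zero_smul, add_zero]

theorem isSphereSolution_polygonS_iff {n : ℕ} (hn : n ≠ 0) {r : ℝ} (hr0 : 0 < r) (hr1 : r < 1)
    (Ω : ℝ) :
    IsSphereSolution n (polygonS n r Ω) ↔
      Ω ^ 2 = ∑ k ∈ Ico 1 n, meridionalCoeff r (2 * π * k / n) := by
  have : NeZero n := ⟨hn⟩
  have hz : √(1 - r ^ 2) ^ 2 = 1 - r ^ 2 := sq_sqrt (by nlinarith)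
  have hz0 : 0 < √(1 - r ^ 2) := sqrt_pos.2 (by nlinarith)
  have hsphere (i : Fin n) (t : ℝ) : dot3 (polygonS n r Ω i t) (polygonS n r Ω i t) = 1 := by
    rw [polygonS_eq_uniformCircle, dot3_uniformCircle, sub_self, cos_zero, mul_one, ← sq, ← sq, hz]
    ring
  rw [IsSphereSolution, and_iff_right hsphere]
  simp only [← sphereForce.eq_1]
  trans ∀ (_ : Fin n) (_ : ℝ), Ω ^ 2 = ∑ k ∈ Ico 1 n, meridionalCoeff r (2 * π * k / n)
  · refine forall_congr' fun i => forall_congr' fun t => ?_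
    rw [sum_sphereForce_polygonS (by nlinarith), polygonS_eq_uniformCircle,
      deriv_deriv_uniformCircle, deriv_uniformCircle, dot3_uniformCircle, sub_self, cos_zero, hz]
    simp only [uniformCircle, Prod.smul_mk, Prod.mk_sub_mk, smul_eq_mul, Prod.mk.injEq]
    constructor
    · rintro ⟨-, -, hvertical⟩
      refine mul_left_cancel₀ (mul_pos (pow_pos hr0 2) hz0).ne' ?_
      linear_combination hvertical
    · intro h
      rw [← h]
      exact ⟨by ring, by ring, by ring⟩
  · simp only [forall_const]

theorem polygon_relative_equilibrium_iff_sphere_odd_general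
    (n : ℕ) (hodd : Odd n) (r : ℝ) (hr0 : 0 < r) (hr1 : r < 1) (Ω : ℝ) :
    IsSphereSolution n (polygonS n r Ω) ↔
      Ω ^ 2 = 2 * ∑ j ∈ Finset.Icc 1 ((n - 1) / 2),
        (1 - Real.cos (2 * (j : ℝ) * π / n)) /
          (1 - (r ^ 2 * Real.cos (2 * (j : ℝ) * π / n) + 1 - r ^ 2) ^ 2) ^ ((3 : ℝ) / 2) := by
  rw [isSphereSolution_polygonS_iff hodd.pos.ne' hr0 hr1,
    sum_Ico_periodic_eq_two_nsmul_of_even (meridionalCoeff_periodic r) (meridionalCoeff_even r)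
      hodd,
    nsmul_eq_mul, Nat.cast_ofNat]
  simp only [meridionalCoeff, mul_right_comm 2 π]

/-- For odd `n ≥ 3` and `0 < r < 1`, the rotating regular `n`-gon at height
`z = √(1 − r²)` on `S²` is a solution of the curved `n`-body equations if and only if
`Ω² = 2 Σ_{j=1}^{(n−1)/2} (1 − cos(2jπ/n)) / (1 − (r² cos(2jπ/n) + 1 − r²)²)^{3/2}`. -/
theorem polygon_relative_equilibrium_iff_sphere_odd
    (n : ℕ) (hn : 3 ≤ n) (hodd : Odd n) (r : ℝ) (hr0 : 0 < r) (hr1 : r < 1) (Ω : ℝ) :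
    IsSphereSolution n (polygonS n r Ω) ↔
      Ω ^ 2 = 2 * ∑ j ∈ Finset.Icc 1 ((n - 1) / 2),
        (1 - Real.cos (2 * (j : ℝ) * π / n)) /
          (1 - (r ^ 2 * Real.cos (2 * (j : ℝ) * π / n) + 1 - r ^ 2) ^ 2) ^ ((3 : ℝ) / 2) :=
  polygon_relative_equilibrium_iff_sphere_odd_general n hodd r hr0 hr1 Ω
end
end

section
/- Let n ≥ 2 be even, let 0 < r < 1, z = √(1 − r²), and Ω ∈ ℝ. The curves q_i(t) = (r cos(Ωt + 2π(i−1)/n), r sin(Ωt + 2π(i−1)/n), z), i = 1,…,n, form a solution of the curved n-body equations on S² if and only if Ω² = 2 Σ_{j=1}^{n/2 − 1} (1 − cos(2jπ/n)) / (1 − (r² cos(2jπ/n) + 1 − r²)²)^{3/2} + 1/(4 r³ (1 − r²)^{3/2}). -/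
/-!
Write every body in cylindrical coordinates `cyl ρ h θ = (ρ cos θ, ρ sin θ, h)`, with
`ρ = r`, `h = √(1 - r²)`. For a uniform rotation `q(t) = cyl ρ h (Ω t + α)` one has
`q̈ + |q̇|² q = Ω² w`, where `w = cyl (-ρh²) (ρ²h) θ` points along the meridian. The pull of a
body on the same circle of latitude, `δ` ahead in longitude, is a multiple `radialForce ρ δ`
of `w` plus a multiple `tangentialForce ρ δ` of the eastward unit vector. For the regular
polygon the offsets are `2πk/n`, `k = 1, …, n - 1`; the eastward parts cancel under
`k ↦ n - k`, so the equations of motion reduce to `Ω² = Σₖ radialForce r (2πk/n)` for every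
`n`. For even `n`, pairing `k` with `n - k` and isolating the antipodal body `k = n/2` gives
the stated formula.
-/

open Real

noncomputable section

open Finset Function

namespace CurvedNBody

section PeriodicSums

variable {M : Type*} [AddCommMonoid M]

lemma sum_range_sub_eq_sum_range_succ (f : ℕ → M) (n : ℕ) :
    ∑ k ∈ range n, f (n - k) = ∑ k ∈ range n, f (k + 1) := by
  rw [← sum_range_reflect]
  exact sum_congr rfl fun k hk => by rw [mem_range] at hk; congr 1; omega

lemma sum_range_two_mul_of_symm (f : ℕ → M) {m : ℕ} (hm : m ≠ 0)
    (hf : ∀ k ≤ m, f (2 * m - k) = f k) :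
    ∑ k ∈ range (2 * m), f k = f 0 + 2 • ∑ k ∈ Icc 1 (m - 1), f k + f m := by
  have upper : ∑ k ∈ range m, f (m + k) = ∑ k ∈ range m, f (k + 1) := by
    rw [← sum_range_sub_eq_sum_range_succ]
    refine sum_congr rfl fun k hk => ?_
    rw [mem_range] at hk
    rw [← hf (m - k) (by omega)]
    congr 1; omega
  obtain ⟨p, rfl⟩ := Nat.exists_eq_add_one_of_ne_zero hm
  have lower : ∑ k ∈ Icc 1 p, f k = ∑ k ∈ range p, f (k + 1) := by
    rw [← Ico_add_one_right_eq_Icc, sum_Ico_eq_sum_range]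
    simp only [add_tsub_cancel_right, add_comm 1]
  rw [two_mul, sum_range_add, upper, sum_range_succ', sum_range_succ, add_tsub_cancel_right,
    lower, two_nsmul]
  abel

lemma _root_.Function.Periodic.sum_fin_sub {g : ℝ → M} {c : ℝ} (hg : Periodic g c) {n : ℕ}
    (i : Fin n) :
    ∑ j : Fin n, g (c * j / n - c * i / n) = ∑ k ∈ range n, g (c * k / n) := by
  have : NeZero n := NeZero.of_pos i.pos
  have hn : (n : ℝ) ≠ 0 := Nat.cast_ne_zero.mpr i.pos.ne'
  rw [← Fin.sum_univ_eq_sum_range (fun k => g (c * k / n))]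
  refine (Fintype.sum_equiv (Equiv.addRight i) (fun k : Fin n => g (c * k / n)) _ fun k => ?_).symm
  have hval : ((k + i : Fin n) : ℝ) = k + i - n * (((k : ℕ) + i) / n : ℕ) := by
    rw [Fin.val_add, eq_sub_iff_add_eq]
    exact_mod_cast Nat.mod_add_div _ _
  rw [Equiv.coe_addRight, hval, ← hg.sub_nat_mul_eq (((k : ℕ) + i) / n)]
  congr 1
  field_simp
  ring

end PeriodicSums

lemma _root_.Function.Periodic.apply_mul_sub_div {α : Type*} {g : ℝ → α} {c : ℝ}
    (hg : Periodic g c) {n k : ℕ} (hn : n ≠ 0) (hk : k ≤ n) :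
    g (c * (n - k : ℕ) / n) = g (-(c * k / n)) := by
  have hn' : (n : ℝ) ≠ 0 := Nat.cast_ne_zero.mpr hn
  rw [← hg (-(c * k / n)), Nat.cast_sub hk]
  congr 1
  field_simp
  ring

lemma _root_.Function.Periodic.sum_range_eq_zero_of_odd {g : ℝ → ℝ} {c : ℝ}
    (hg : Periodic g c) (hodd : ∀ x, g (-x) = -g x) (n : ℕ) :
    ∑ k ∈ range n, g (c * k / n) = 0 := by
  rcases eq_or_ne n 0 with rfl | hn
  · simp
  have reflect : ∀ k ≤ n, g (c * (n - k : ℕ) / n) = -g (c * k / n) := fun k hk => by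
    rw [hg.apply_mul_sub_div hn hk, hodd]
  have shift : ∑ k ∈ range n, g (c * (k + 1 : ℕ) / n) = ∑ k ∈ range n, g (c * k / n) := by
    have hg0 : g 0 = 0 := by linarith [neg_zero (G := ℝ) ▸ hodd 0]
    have h0 : g (c * n / n) = g (c * (0 : ℕ) / n) := by simpa [hg0] using reflect 0 n.zero_le
    have := sum_range_succ (fun k => g (c * k / n)) n
    rw [sum_range_succ', h0] at this
    exact add_right_cancel this
  have antisymm :
      ∑ k ∈ range n, g (c * (k + 1 : ℕ) / n) = -∑ k ∈ range n, g (c * k / n) := by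
    rw [← sum_range_sub_eq_sum_range_succ (fun k => g (c * k / n)), ← sum_neg_distrib]
    exact sum_congr rfl fun k hk => reflect k (mem_range.mp hk).le
  linarith

def cyl (ρ h θ : ℝ) : ℝ × ℝ × ℝ := (ρ * cos θ, ρ * sin θ, h)

lemma polygonS_eq_cyl (n : ℕ) (r Ω : ℝ) :
    polygonS n r Ω = fun (i : Fin n) t => cyl r √(1 - r ^ 2) (Ω * t + 2 * π * (i : ℕ) / n) :=
  rfl

lemma dot3_cyl (ρ h θ ρ' h' θ' : ℝ) :
    dot3 (cyl ρ h θ) (cyl ρ' h' θ') = ρ * ρ' * cos (θ' - θ) + h * h' := by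
  simp only [dot3, cyl, cos_sub]
  ring

lemma hasDerivAt_cyl_rotation (ρ h Ω α t : ℝ) :
    HasDerivAt (fun t => cyl ρ h (Ω * t + α)) (cyl (Ω * ρ) 0 (Ω * t + (α + π / 2))) t := by
  have hθ : HasDerivAt (fun t => Ω * t + α) Ω t := by
    simpa using ((hasDerivAt_id t).const_mul Ω).add_const α
  convert (hθ.cos.const_mul ρ).prodMk ((hθ.sin.const_mul ρ).prodMk (hasDerivAt_const t h))
    using 1
  · rfl
  · rw [← add_assoc]
    simp only [cyl, cos_add_pi_div_two, sin_add_pi_div_two, Prod.mk.injEq]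
    exact ⟨by ring, by ring, trivial⟩

lemma deriv_cyl_rotation (ρ h Ω α : ℝ) :
    deriv (fun t => cyl ρ h (Ω * t + α)) = fun t => cyl (Ω * ρ) 0 (Ω * t + (α + π / 2)) :=
  funext fun t => (hasDerivAt_cyl_rotation ρ h Ω α t).deriv

lemma deriv_deriv_add_dot3_smul_cyl_rotation {ρ h : ℝ} (hρh : ρ ^ 2 + h ^ 2 = 1)
    (Ω α t : ℝ) :
    deriv (deriv fun t => cyl ρ h (Ω * t + α)) t
        + dot3 (deriv (fun t => cyl ρ h (Ω * t + α)) t)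
            (deriv (fun t => cyl ρ h (Ω * t + α)) t) • cyl ρ h (Ω * t + α)
      = Ω ^ 2 • cyl (-(ρ * h ^ 2)) (ρ ^ 2 * h) (Ω * t + α) := by
  rw [deriv_cyl_rotation, deriv_cyl_rotation, dot3_cyl]
  beta_reduce
  rw [sub_self, cos_zero, add_assoc α, add_halves, ← add_assoc]
  simp only [cyl, cos_add_pi, sin_add_pi, Prod.smul_mk, smul_eq_mul, Prod.mk_add_mk, Prod.mk.injEq]
  refine ⟨?_, ?_, ?_⟩
  · linear_combination (Ω ^ 2 * ρ * cos (Ω * t + α)) * hρh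
  · linear_combination (Ω ^ 2 * ρ * sin (Ω * t + α)) * hρh
  · ring

lemma cyl_sub_dot3_smul {ρ h : ℝ} (hρh : ρ ^ 2 + h ^ 2 = 1) (θ φ : ℝ) :
    cyl ρ h φ - dot3 (cyl ρ h θ) (cyl ρ h φ) • cyl ρ h θ
      = (1 - cos (φ - θ)) • cyl (-(ρ * h ^ 2)) (ρ ^ 2 * h) θ
        + (ρ * sin (φ - θ)) • cyl 1 0 (θ + π / 2) := by
  obtain ⟨δ, rfl⟩ : ∃ δ, φ = θ + δ := ⟨φ - θ, by ring⟩
  rw [dot3_cyl, add_sub_cancel_left]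
  simp only [cyl, cos_add_pi_div_two, sin_add_pi_div_two, Prod.smul_mk, smul_eq_mul,
    Prod.mk_sub_mk, Prod.mk_add_mk, Prod.mk.injEq]
  rw [cos_add, sin_add]
  refine ⟨?_, ?_, ?_⟩
  · linear_combination (-(ρ * cos θ * cos δ)) * hρh
  · linear_combination (-(ρ * sin θ * cos δ)) * hρh
  · linear_combination (-h) * hρh

def radialForce (r δ : ℝ) : ℝ :=
  (1 - cos δ) / (1 - (r ^ 2 * cos δ + 1 - r ^ 2) ^ 2) ^ ((3 : ℝ) / 2)

def tangentialForce (r δ : ℝ) : ℝ :=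
  r * sin δ / (1 - (r ^ 2 * cos δ + 1 - r ^ 2) ^ 2) ^ ((3 : ℝ) / 2)

lemma radialForce_periodic (r : ℝ) : Periodic (radialForce r) (2 * π) := fun δ => by
  simp only [radialForce, cos_add_two_pi]

lemma tangentialForce_periodic (r : ℝ) : Periodic (tangentialForce r) (2 * π) := fun δ => by
  simp only [tangentialForce, cos_add_two_pi, sin_add_two_pi]

lemma radialForce_neg (r δ : ℝ) : radialForce r (-δ) = radialForce r δ := by
  simp only [radialForce, cos_neg]

lemma tangentialForce_neg (r δ : ℝ) : tangentialForce r (-δ) = -tangentialForce r δ := by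
  simp only [tangentialForce, cos_neg, sin_neg, mul_neg, neg_div]

lemma radialForce_zero (r : ℝ) : radialForce r 0 = 0 := by
  simp [radialForce]

lemma tangentialForce_zero (r : ℝ) : tangentialForce r 0 = 0 := by
  simp [tangentialForce]

lemma radialForce_pi {r : ℝ} (hr0 : 0 < r) (hr1 : r < 1) :
    radialForce r π = 1 / (4 * r ^ 3 * (1 - r ^ 2) ^ ((3 : ℝ) / 2)) := by
  have hbase : 1 - (r ^ 2 * cos π + 1 - r ^ 2) ^ 2 = (2 * r) ^ 2 * (1 - r ^ 2) := by
    rw [cos_pi]; ring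
  have hcube : ((2 * r) ^ 2) ^ ((3 : ℝ) / 2) = (2 * r) ^ 3 := by
    rw [← rpow_natCast (2 * r) 2, ← rpow_mul (by positivity), ← rpow_natCast]
    norm_num
  rw [radialForce, hbase, mul_rpow (by positivity) (by nlinarith), hcube, cos_pi]
  ring

lemma pairForce_cyl {ρ h : ℝ} (hρh : ρ ^ 2 + h ^ 2 = 1) (θ φ : ℝ) :
    (1 / (1 - dot3 (cyl ρ h θ) (cyl ρ h φ) ^ 2) ^ ((3 : ℝ) / 2)) •
        (cyl ρ h φ - dot3 (cyl ρ h θ) (cyl ρ h φ) • cyl ρ h θ)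
      = radialForce ρ (φ - θ) • cyl (-(ρ * h ^ 2)) (ρ ^ 2 * h) θ
        + tangentialForce ρ (φ - θ) • cyl 1 0 (θ + π / 2) := by
  have hdot : dot3 (cyl ρ h θ) (cyl ρ h φ) = ρ ^ 2 * cos (φ - θ) + 1 - ρ ^ 2 := by
    rw [dot3_cyl]
    linear_combination hρh
  rw [cyl_sub_dot3_smul hρh, hdot, smul_add, smul_smul, smul_smul, radialForce,
    tangentialForce, one_div_mul_eq_div, one_div_mul_eq_div]

lemma sum_pairForce_cyl_polygon {ρ h : ℝ} (hρh : ρ ^ 2 + h ^ 2 = 1) (n : ℕ) (θ₀ : ℝ)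
    (i : Fin n) :
    ∑ j ∈ univ.erase i,
        (1 / (1 - dot3 (cyl ρ h (θ₀ + 2 * π * (i : ℕ) / n))
          (cyl ρ h (θ₀ + 2 * π * (j : ℕ) / n)) ^ 2) ^ ((3 : ℝ) / 2)) •
        (cyl ρ h (θ₀ + 2 * π * (j : ℕ) / n)
          - dot3 (cyl ρ h (θ₀ + 2 * π * (i : ℕ) / n))
              (cyl ρ h (θ₀ + 2 * π * (j : ℕ) / n)) • cyl ρ h (θ₀ + 2 * π * (i : ℕ) / n))
      = (∑ k ∈ range n, radialForce ρ (2 * π * k / n)) •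
            cyl (-(ρ * h ^ 2)) (ρ ^ 2 * h) (θ₀ + 2 * π * (i : ℕ) / n)
        + (∑ k ∈ range n, tangentialForce ρ (2 * π * k / n)) •
            cyl 1 0 (θ₀ + 2 * π * (i : ℕ) / n + π / 2) := by
  simp only [pairForce_cyl hρh, add_sub_add_left_eq_sub]
  rw [sum_erase _ (by simp only [sub_self, radialForce_zero, tangentialForce_zero, zero_smul,
    add_zero]), sum_add_distrib, ← sum_smul, ← sum_smul, (radialForce_periodic ρ).sum_fin_sub,
    (tangentialForce_periodic ρ).sum_fin_sub]

theorem isSphereSolution_polygonS_iff {n : ℕ} (hn : n ≠ 0) {r : ℝ} (hr0 : 0 < r) (hr1 : r < 1)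
    (Ω : ℝ) :
    IsSphereSolution n (polygonS n r Ω) ↔
      Ω ^ 2 = ∑ k ∈ range n, radialForce r (2 * π * k / n) := by
  have : Nonempty (Fin n) := ⟨⟨0, Nat.pos_of_ne_zero hn⟩⟩
  have hrz : r ^ 2 + √(1 - r ^ 2) ^ 2 = 1 := by
    rw [sq_sqrt (by nlinarith)]
    ring
  have hw (θ : ℝ) : cyl (-(r * √(1 - r ^ 2) ^ 2)) (r ^ 2 * √(1 - r ^ 2)) θ ≠ 0 := by
    have : 0 < r ^ 2 * √(1 - r ^ 2) := mul_pos (by positivity) (sqrt_pos.mpr (by nlinarith))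
    exact fun h => this.ne' (congrArg (fun v => v.2.2) h)
  have hsphere (θ : ℝ) : dot3 (cyl r √(1 - r ^ 2) θ) (cyl r √(1 - r ^ 2) θ) = 1 := by
    rw [dot3_cyl, sub_self, cos_zero]
    linear_combination hrz
  simp only [IsSphereSolution, polygonS_eq_cyl, hsphere, eq_sub_iff_add_eq,
    deriv_deriv_add_dot3_smul_cyl_rotation hrz, sum_pairForce_cyl_polygon hrz,
    (tangentialForce_periodic r).sum_range_eq_zero_of_odd (tangentialForce_neg r), zero_smul,
    add_zero, smul_left_inj (hw _)]
  simp only [implies_true, forall_const, true_and]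

lemma sum_range_radialForce_of_even {n : ℕ} (hn : 2 ≤ n) (heven : Even n) {r : ℝ}
    (hr0 : 0 < r) (hr1 : r < 1) :
    ∑ k ∈ range n, radialForce r (2 * π * k / n)
      = 2 * ∑ j ∈ Icc 1 (n / 2 - 1), radialForce r (2 * j * π / n)
        + 1 / (4 * r ^ 3 * (1 - r ^ 2) ^ ((3 : ℝ) / 2)) := by
  obtain ⟨m, rfl⟩ := heven
  rw [← two_mul] at hn ⊢
  have hm : m ≠ 0 := by omega
  have hsymm : ∀ k ≤ m, radialForce r (2 * π * (2 * m - k : ℕ) / (2 * m : ℕ))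
      = radialForce r (2 * π * k / (2 * m : ℕ)) := fun k hk => by
    rw [(radialForce_periodic r).apply_mul_sub_div (by omega) (by omega), radialForce_neg]
  have hhalf : 2 * π * m / (2 * m : ℕ) = π := by
    push_cast
    field_simp
  rw [sum_range_two_mul_of_symm _ hm hsymm, hhalf, radialForce_pi hr0 hr1, Nat.cast_zero,
    mul_zero, zero_div, radialForce_zero, zero_add, nsmul_eq_mul, Nat.cast_two,
    Nat.mul_div_cancel_left m two_pos]
  simp only [mul_right_comm 2 π]

end CurvedNBody

/-- For even `n ≥ 2` and `0 < r < 1`, the rotating regular `n`-gon at height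
`z = √(1 − r²)` on `S²` is a solution of the curved `n`-body equations if and only if
`Ω² = 2 Σ_{j=1}^{n/2−1} (1 − cos(2jπ/n)) / (1 − (r² cos(2jπ/n) + 1 − r²)²)^{3/2}
      + 1/(4 r³ (1 − r²)^{3/2})`. -/
theorem polygon_relative_equilibrium_iff_sphere_even
    (n : ℕ) (hn : 2 ≤ n) (heven : Even n) (r : ℝ) (hr0 : 0 < r) (hr1 : r < 1) (Ω : ℝ) :
    IsSphereSolution n (polygonS n r Ω) ↔
      Ω ^ 2 = 2 * (∑ j ∈ Finset.Icc 1 (n / 2 - 1),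
        (1 - Real.cos (2 * (j : ℝ) * π / n)) /
          (1 - (r ^ 2 * Real.cos (2 * (j : ℝ) * π / n) + 1 - r ^ 2) ^ 2) ^ ((3 : ℝ) / 2))
        + 1 / (4 * r ^ 3 * (1 - r ^ 2) ^ ((3 : ℝ) / 2)) := by
  rw [CurvedNBody.isSphereSolution_polygonS_iff (by omega) hr0 hr1,
    CurvedNBody.sum_range_radialForce_of_even hn heven hr0 hr1]
  rfl
end
end

section
/- Let 0 < r < 1, z₀ = √(1 − r²), and let k, h ∈ ℝ with k² + h² = r². Set w = (k + ih)/(1 + z₀) ∈ ℂ and ŵ = −(k + ih)/(1 − z₀) ∈ ℂ. Then for every z = u + iv ∈ ℂ (u, v ∈ ℝ) one has the identity (1 + |z|²)² − (2ku + 2hv + z₀(1 − |z|²))² = r² |z − w|² |z − ŵ|². (This identity expresses the denominator of the cotangent potential on S², written in stereographic coordinates, as a product of distances to the projected position of a primary and to the projection of its antipode.) -/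
open Real Complex

/-! The denominator is a difference of squares `A² − B²` with `A = 1 + |z|²`. Since a point
`(p, c)` of the unit sphere has `|p|² = 1 − c²`, each factor `A ∓ B` is `(1 ± z₀)` times the squared
distance from `z` to the stereographic image of `±(k, h, z₀)`, and `(1 + z₀)(1 − z₀) = r²`. -/

theorem one_add_mul_norm_sub_inv_smul_sq {E : Type*} [NormedAddCommGroup E]
    [InnerProductSpace ℝ E] {p : E} {c : ℝ} (hpc : ‖p‖ ^ 2 + c ^ 2 = 1) (hc : 1 + c ≠ 0)
    (z : E) :
    (1 + c) * ‖z - (1 + c)⁻¹ • p‖ ^ 2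
      = 1 + ‖z‖ ^ 2 - (2 * inner ℝ p z + c * (1 - ‖z‖ ^ 2)) := by
  rw [norm_sub_sq_real, inner_smul_right, real_inner_comm, norm_smul, mul_pow, Real.norm_eq_abs,
    sq_abs]
  field_simp
  linear_combination hpc

theorem Complex.inner_ofReal_add_ofReal_mul_I (k h u v : ℝ) :
    inner ℝ ((k : ℂ) + (h : ℂ) * I) ((u : ℂ) + (v : ℂ) * I) = k * u + h * v := by
  simp [Complex.inner, mul_comm]

/-- Stereographic-coordinate factorization of the denominator of the cotangent potential
on `S²`:  if `(k, h, z₀)` is a point of the unit sphere with `k² + h² = r²`,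
`z₀ = √(1 − r²)`, `w` is its stereographic projection (from `(0,0,−1)`) and `wHat` that of
its antipode, then for every `z = u + iv ∈ ℂ`,
`(1 + |z|²)² − (2ku + 2hv + z₀(1 − |z|²))² = r² |z − w|² |z − wHat|²`. -/
theorem sphere_denominator_factorization
    (r z₀ k h : ℝ) (hr0 : 0 < r) (hr1 : r < 1)
    (hz₀ : z₀ = Real.sqrt (1 - r ^ 2)) (hkh : k ^ 2 + h ^ 2 = r ^ 2)
    (u v : ℝ) (z w wHat : ℂ)
    (hz : z = (u : ℂ) + (v : ℂ) * Complex.I)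
    (hw : w = ((k : ℂ) + (h : ℂ) * Complex.I) / (1 + (z₀ : ℂ)))
    (hwHat : wHat = -((k : ℂ) + (h : ℂ) * Complex.I) / (1 - (z₀ : ℂ))) :
    (1 + ‖z‖ ^ 2) ^ 2
        - (2 * k * u + 2 * h * v + z₀ * (1 - ‖z‖ ^ 2)) ^ 2
      = r ^ 2 * ‖z - w‖ ^ 2 * ‖z - wHat‖ ^ 2 := by
  set p : ℂ := (k : ℂ) + (h : ℂ) * I
  have hz₀sq : z₀ ^ 2 = 1 - r ^ 2 := by
    rw [hz₀, Real.sq_sqrt]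
    nlinarith
  have hz₀nonneg : 0 ≤ z₀ := hz₀ ▸ Real.sqrt_nonneg _
  have hz₀lt : z₀ < 1 := by nlinarith
  have hp : ‖p‖ ^ 2 = r ^ 2 := by
    rw [Complex.sq_norm, Complex.normSq_add_mul_I, hkh]
  have hpz : inner ℝ p z = k * u + h * v := by
    rw [hz, Complex.inner_ofReal_add_ofReal_mul_I]
  have hw' : w = (1 + z₀)⁻¹ • p := by
    rw [hw, Complex.real_smul]
    push_cast
    ring
  have hwHat' : wHat = (1 + -z₀)⁻¹ • -p := by
    rw [hwHat, Complex.real_smul]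
    push_cast
    ring
  have near := one_add_mul_norm_sub_inv_smul_sq (p := p) (c := z₀) (by linarith) (by linarith) z
  have far := one_add_mul_norm_sub_inv_smul_sq (p := -p) (c := -z₀) (by rw [norm_neg]; linarith)
    (by linarith) z
  rw [← hw', hpz] at near
  rw [← hwHat', inner_neg_left, hpz] at far
  calc (1 + ‖z‖ ^ 2) ^ 2 - (2 * k * u + 2 * h * v + z₀ * (1 - ‖z‖ ^ 2)) ^ 2
      = (1 + z₀) * ‖z - w‖ ^ 2 * ((1 + -z₀) * ‖z - wHat‖ ^ 2) := by rw [near, far]; ring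
    _ = r ^ 2 * ‖z - w‖ ^ 2 * ‖z - wHat‖ ^ 2 := by
      linear_combination (-(‖z - w‖ ^ 2 * ‖z - wHat‖ ^ 2)) * hz₀sq
end

section
/- Fix σ ∈ {+1, −1}, r > 0, z₀ ∈ ℝ with z₀ ≠ ±1, and for j = 1,…,n let k_j, h_j ∈ ℝ with k_j² + h_j² = r², and set w_j = (k_j + i h_j)/(1 + z₀), ŵ_j = −(k_j + i h_j)/(1 − z₀). Define N_j(z) = k_j(z + z̄) − i h_j(z − z̄) + σ z₀ (1 − σ|z|²) and V(z) = Σ_{j=1}^{n} N_j(z)/(r |z − w_j| |z − ŵ_j|) for z ∈ ℂ \ {w_1,…,w_n, ŵ_1,…,ŵ_n}. Fix k ∈ {1,…,n} and assume w_k ≠ w_j for every j ≠ k and w_k ≠ ŵ_j for every j. Then the function F(w) = |w|² · V(w·conj(w) + w_k), defined for all w ≠ 0 in a sufficiently small punctured neighborhood of 0 ∈ ℂ, extends continuously to w = 0 with value F(0) = N_k(w_k)/(r |w_k − ŵ_k|). In particular, the Levi-Civita-type transformation z = w·conj(w) + w_k together with the time rescaling dt/ds = |w|² removes the singularity of the transformed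 Hamiltonian due to collision of the massless particle with the k-th primary. -/
/-!
Near the `K`-th primary every term of `V` except the `K`-th stays bounded, while the
`K`-th one blows up exactly like `1 / |z - w_K|`. So `|z - w_K| · V(z)` tends to
`N_K(w_K) / (r |w_K - ŵ_K|)` as `z → w_K`, and the substitution `z = w·w̄ + w_K` turns the
factor `|z - w_K|` into `|w|²`.
-/

open Filter Topology

namespace LeviCivita

variable {g : ℂ → ℂ} {a p q : ℂ} {r : ℝ}

theorem tendsto_norm_sub_mul_div_of_ne (hg : ContinuousAt g a) (hr : r ≠ 0) (hp : a ≠ p)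
    (hq : a ≠ q) :
    Tendsto (fun z => ((‖z - a‖ : ℝ) : ℂ) * (g z / ((r * ‖z - p‖ * ‖z - q‖ : ℝ) : ℂ)))
      (𝓝 a) (𝓝 0) := by
  have hcont : ContinuousAt
      (fun z => ((‖z - a‖ : ℝ) : ℂ) * (g z / ((r * ‖z - p‖ * ‖z - q‖ : ℝ) : ℂ))) a := by
    have hden : ((r * ‖a - p‖ * ‖a - q‖ : ℝ) : ℂ) ≠ 0 := by
      have := sub_ne_zero.2 hp
      have := sub_ne_zero.2 hq
      simp_all
    fun_prop (disch := exact hden)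
  simpa using hcont.tendsto

theorem tendsto_norm_sub_mul_div_self (hg : ContinuousAt g a) (hr : r ≠ 0) (hq : a ≠ q) :
    Tendsto (fun z => ((‖z - a‖ : ℝ) : ℂ) * (g z / ((r * ‖z - a‖ * ‖z - q‖ : ℝ) : ℂ)))
      (𝓝[≠] a) (𝓝 (g a / ((r * ‖a - q‖ : ℝ) : ℂ))) := by
  have hden : ((r * ‖a - q‖ : ℝ) : ℂ) ≠ 0 := by
    have := sub_ne_zero.2 hq
    simp_all
  have hcont : ContinuousAt (fun z => g z / ((r * ‖z - q‖ : ℝ) : ℂ)) a := by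
    fun_prop (disch := exact hden)
  refine (hcont.tendsto.mono_left nhdsWithin_le_nhds).congr' ?_
  filter_upwards [self_mem_nhdsWithin] with z hz
  have hza : ((‖z - a‖ : ℝ) : ℂ) ≠ 0 := by
    have := sub_ne_zero.2 (show z ≠ a from hz)
    simp_all
  push_cast
  rw [mul_div_assoc', show (r : ℂ) * ‖z - a‖ * ‖z - q‖ = ‖z - a‖ * (r * ‖z - q‖) by ring,
    mul_div_mul_left _ _ hza]

theorem tendsto_norm_sub_mul_sum_div {ι : Type*} [Fintype ι]
    {g : ι → ℂ → ℂ} {p q : ι → ℂ} {i₀ : ι} (hg : ∀ i, ContinuousAt (g i) (p i₀))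
    (hr : r ≠ 0) (hp : ∀ i, i ≠ i₀ → p i₀ ≠ p i) (hq : ∀ i, p i₀ ≠ q i) :
    Tendsto
      (fun z => ((‖z - p i₀‖ : ℝ) : ℂ) * ∑ i, g i z / ((r * ‖z - p i‖ * ‖z - q i‖ : ℝ) : ℂ))
      (𝓝[≠] p i₀) (𝓝 (g i₀ (p i₀) / ((r * ‖p i₀ - q i₀‖ : ℝ) : ℂ))) := by
  classical
  simp_rw [Finset.mul_sum]
  rw [show g i₀ (p i₀) / ((r * ‖p i₀ - q i₀‖ : ℝ) : ℂ) =
      ∑ i, if i = i₀ then g i (p i) / ((r * ‖p i - q i‖ : ℝ) : ℂ) else 0 by simp]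
  refine tendsto_finsetSum _ fun i _ => ?_
  split_ifs with hi
  · subst hi
    exact tendsto_norm_sub_mul_div_self (hg i) hr (hq i)
  · exact (tendsto_norm_sub_mul_div_of_ne (hg i) hr (hp i hi) (hq i)).mono_left
      nhdsWithin_le_nhds

theorem norm_mul_conj_add_sub (w a : ℂ) : ‖w * starRingEnd ℂ w + a - a‖ = ‖w‖ ^ 2 := by
  rw [add_sub_cancel_right, norm_mul, Complex.norm_conj, sq]

theorem tendsto_mul_conj_add_nhdsNE (a : ℂ) :
    Tendsto (fun w => w * starRingEnd ℂ w + a) (𝓝[≠] 0) (𝓝[≠] a) := by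
  refine tendsto_nhdsWithin_iff.2 ⟨?_, ?_⟩
  · have hcont : Continuous fun w => w * starRingEnd ℂ w + a := by fun_prop
    exact (hcont.tendsto' 0 a (by simp)).mono_left nhdsWithin_le_nhds
  · filter_upwards [self_mem_nhdsWithin] with w hw
    rw [Set.mem_compl_singleton_iff, ← sub_ne_zero, ← norm_ne_zero_iff, norm_mul_conj_add_sub]
    exact pow_ne_zero 2 (norm_ne_zero_iff.2 hw)

end LeviCivita

theorem leviCivita_local_regularization_general
    (σ : ℝ) (r z₀ : ℝ) (hr : 0 < r)
    (n : ℕ) (k h : Fin n → ℝ)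
    (w wHat : Fin n → ℂ)
    (N : Fin n → ℂ → ℂ)
    (hN : ∀ j z, N j z =
      (k j : ℂ) * (z + (starRingEnd ℂ) z) - Complex.I * (h j : ℂ) * (z - (starRingEnd ℂ) z)
        + (σ : ℂ) * (z₀ : ℂ) * (1 - (σ : ℂ) * ((‖z‖ : ℝ) : ℂ) ^ 2))
    (V : ℂ → ℂ)
    (hV : ∀ z, V z = ∑ j, N j z /
      ((r * ‖z - w j‖ * ‖z - wHat j‖ : ℝ) : ℂ))
    (K : Fin n) (hKw : ∀ j, j ≠ K → w K ≠ w j) (hKwHat : ∀ j, w K ≠ wHat j) :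
    Filter.Tendsto
      (fun ww : ℂ => ((‖ww‖ ^ 2 : ℝ) : ℂ) * V (ww * (starRingEnd ℂ) ww + w K))
      (nhdsWithin 0 {(0 : ℂ)}ᶜ)
      (nhds (N K (w K) / ((r * ‖w K - wHat K‖ : ℝ) : ℂ))) := by
  have hNc : ∀ j, Continuous (N j) := fun j => by
    rw [show N j = _ from funext (hN j)]
    fun_prop
  have hcollision := LeviCivita.tendsto_norm_sub_mul_sum_div (fun j => (hNc j).continuousAt)
    hr.ne' hKw hKwHat
  refine (hcollision.comp (LeviCivita.tendsto_mul_conj_add_nhdsNE (w K))).congr fun ww => ?_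
  simp only [Function.comp_apply, LeviCivita.norm_mul_conj_add_sub, hV]

/-- Levi-Civita-type local regularization in the restricted curved `(n+1)`-body problem
on `S²` (`σ = +1`) or `H²` (`σ = −1`):  in rotating stereographic coordinates the
potential is `V(z) = Σⱼ Nⱼ(z)/(r |z − wⱼ| |z − ŵⱼ|)`, where
`Nⱼ(z) = kⱼ(z + z̄) − i hⱼ(z − z̄) + σ z₀ (1 − σ|z|²)`, the `wⱼ` are the projected
primaries and the `ŵⱼ` the projected antipodes/auxiliary points.  If `w_K` is distinct
from all other `wⱼ` and from every `ŵⱼ`, then after the transformation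
`z = w·conj(w) + w_K` (with time rescaling `dt/ds = |w|²`) the function
`F(w) = |w|² · V(w·conj(w) + w_K)` extends continuously to `w = 0` with value
`N_K(w_K)/(r |w_K − ŵ_K|)`; i.e. the collision singularity with the `K`-th primary is
removed. -/
theorem leviCivita_local_regularization
    (σ : ℝ) (hσ : σ = 1 ∨ σ = -1) (r z₀ : ℝ) (hr : 0 < r)
    (hz₀1 : z₀ ≠ 1) (hz₀2 : z₀ ≠ -1)
    (n : ℕ) (k h : Fin n → ℝ) (hkh : ∀ j, (k j) ^ 2 + (h j) ^ 2 = r ^ 2)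
    (w wHat : Fin n → ℂ)
    (hw : ∀ j, w j = ((k j : ℂ) + (h j : ℂ) * Complex.I) / (1 + (z₀ : ℂ)))
    (hwHat : ∀ j, wHat j = -((k j : ℂ) + (h j : ℂ) * Complex.I) / (1 - (z₀ : ℂ)))
    (N : Fin n → ℂ → ℂ)
    (hN : ∀ j z, N j z =
      (k j : ℂ) * (z + (starRingEnd ℂ) z) - Complex.I * (h j : ℂ) * (z - (starRingEnd ℂ) z)
        + (σ : ℂ) * (z₀ : ℂ) * (1 - (σ : ℂ) * ((‖z‖ : ℝ) : ℂ) ^ 2))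
    (V : ℂ → ℂ)
    (hV : ∀ z, V z = ∑ j, N j z /
      ((r * ‖z - w j‖ * ‖z - wHat j‖ : ℝ) : ℂ))
    (K : Fin n) (hKw : ∀ j, j ≠ K → w K ≠ w j) (hKwHat : ∀ j, w K ≠ wHat j) :
    Filter.Tendsto
      (fun ww : ℂ => ((‖ww‖ ^ 2 : ℝ) : ℂ) * V (ww * (starRingEnd ℂ) ww + w K))
      (nhdsWithin 0 {(0 : ℂ)}ᶜ)
      (nhds (N K (w K) / ((r * ‖w K - wHat K‖ : ℝ) : ℂ))) :=
  leviCivita_local_regularization_general σ r z₀ hr n k h w wHat N hN V hV K hKw hKwHat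
end

section
/- Fix σ ∈ {+1, −1}, r > 0, z₀ ∈ ℝ with z₀ ≠ ±1, n ≥ 2, and w_1 ∈ ℂ \ {0}. For j = 1,…,n let k_j = Re((1+z₀) w_j), h_j = Im((1+z₀) w_j) where w_j = w_1 e^{2πi(j−1)/n} (so k_j² + h_j² = r² with r = (1+z₀)|w_1|, assumed positive), and set ŵ_j = −(k_j + i h_j)/(1 − z₀). Assume ŵ_j ≠ w_i for all i, j. Define N_j(z) = k_j(z + z̄) − i h_j(z − z̄) + σ z₀ (1 − σ|z|²), V(z) = Σ_{j=1}^{n} N_j(z)/(r |z − w_j| |z − ŵ_j|), and g(w) = ((n−1)/n) w + w_1^n/(n w^{n−1}) for w ≠ 0. Then for each i ∈ {1,…,n} the function w ↦ |g'(w)|² · V(g(w)), defined on a punctured neighborhood of w_i, extends continuously to w = w_i; i.e., the Birkhoff-type transformation z = g(w), together with the time rescaling dt/ds = |g'(w)|², simultaneously removes all n binary-collision singularities between the massless particle and the primaries, the only remaining singularity of the transformed potential being at w = 0 (which corresponds to |z| → ∞). -/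
/-!
Fix a vertex `a = wᵢ`. Since `aⁿ = w₁ⁿ`, the map `g(x) = ((n−1)/n) x + aⁿ/(n x^{n−1})` fixes
`a` and is critical there: `g(x) − a = (x − a)² Q(x)/(n x^{n−1})` with
`Q(a) = n(n−1)/2 · a^{n−2} ≠ 0`, while `g'(x) = (n−1)(x − a) S(x)/(n xⁿ)` with
`S(x) = (xⁿ − aⁿ)/(x − a)`. Hence `|g'|² = |φ| · |g − a|` with `φ` continuous at `a`, which
absorbs the factor `1/|g − wᵢ|` of the colliding term of `V ∘ g`; every other term stays bounded
near `a` and is multiplied by `|g'|² → 0`.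
-/

open Real Filter Topology

noncomputable section

open Finset

section Quotient

variable {R : Type*} [CommRing R]

def birkhoffQuot (n : ℕ) (a x : R) : R :=
  ∑ k ∈ range n, x ^ k * ∑ l ∈ range (n - 1 - k), x ^ l * a ^ (n - 1 - k - 1 - l)

theorem birkhoffQuot_mul_sub (n : ℕ) (a x : R) :
    birkhoffQuot n a x * (x - a) =
      n * x ^ (n - 1) - ∑ k ∈ range n, x ^ k * a ^ (n - 1 - k) := by
  have hconst : (n : R) * x ^ (n - 1) = ∑ _k ∈ range n, x ^ (n - 1) := by
    rw [sum_const, card_range, nsmul_eq_mul]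
  rw [birkhoffQuot, sum_mul, hconst, ← sum_sub_distrib]
  refine sum_congr rfl fun k hk => ?_
  rw [mul_assoc, geom_sum₂_mul, mul_sub, ← pow_add, Nat.add_sub_cancel' (by grind)]

theorem sub_sq_mul_birkhoffQuot (n : ℕ) (a x : R) :
    (x - a) ^ 2 * birkhoffQuot n a x = (n - 1) * x ^ n - n * a * x ^ (n - 1) + a ^ n := by
  rcases n with _ | m
  · simp [birkhoffQuot]
  calc (x - a) ^ 2 * birkhoffQuot (m + 1) a x
      = (x - a) * (birkhoffQuot (m + 1) a x * (x - a)) := by ring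
    _ = (m + 1) * x ^ m * (x - a)
          - (∑ k ∈ range (m + 1), x ^ k * a ^ (m + 1 - 1 - k)) * (x - a) := by
      rw [birkhoffQuot_mul_sub]; push_cast; ring
    _ = _ := by rw [geom_sum₂_mul]; push_cast; ring

theorem birkhoffQuot_self (n : ℕ) (a : R) :
    birkhoffQuot n a a = (∑ k ∈ range n, (n - 1 - k : ℕ)) * a ^ (n - 2) := by
  push_cast
  rw [birkhoffQuot, sum_mul]
  refine sum_congr rfl fun k _ => ?_
  have hinner : ∑ l ∈ range (n - 1 - k), a ^ l * a ^ (n - 1 - k - 1 - l)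
      = ((n - 1 - k : ℕ) : R) * a ^ (n - 2 - k) := by
    have hterm : ∀ l ∈ range (n - 1 - k), a ^ l * a ^ (n - 1 - k - 1 - l) = a ^ (n - 2 - k) :=
      fun l hl => by rw [← pow_add]; grind
    rw [sum_congr rfl hterm, sum_const, card_range, nsmul_eq_mul]
  rcases Nat.lt_or_ge (k + 1) n with hk | hk
  · rw [hinner, mul_left_comm, ← pow_add, Nat.add_sub_cancel' (by omega)]
  · simp [Nat.sub_eq_zero_of_le (show n - 1 ≤ k by omega)]

theorem birkhoffQuot_self_ne_zero [IsDomain R] [CharZero R] {n : ℕ} (hn : 2 ≤ n) {a : R}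
    (ha : a ≠ 0) : birkhoffQuot n a a ≠ 0 := by
  have hpos : 0 < ∑ k ∈ range n, (n - 1 - k) :=
    sum_pos' (fun _ _ => Nat.zero_le _) ⟨0, mem_range.2 (by omega), by omega⟩
  rw [birkhoffQuot_self]
  exact mul_ne_zero (Nat.cast_ne_zero.2 hpos.ne') (pow_ne_zero _ ha)

theorem continuous_birkhoffQuot [TopologicalSpace R] [IsTopologicalRing R] (n : ℕ) (a : R) :
    Continuous (birkhoffQuot n a) := by
  unfold birkhoffQuot
  fun_prop

end Quotient

section Map

variable {K : Type*} [Field K] [CharZero K] {n : ℕ} {a c x : K}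

def birkhoffMap (n : ℕ) (c x : K) : K := ((n - 1) / n) * x + c / (n * x ^ (n - 1))

def birkhoffMapDeriv (n : ℕ) (c x : K) : K := (n - 1) / n - (n - 1) * c / (n * x ^ n)

def birkhoffFactor (n : ℕ) (a x : K) : K :=
  (n - 1) ^ 2 * (∑ k ∈ range n, x ^ k * a ^ (n - 1 - k)) ^ 2 /
    (n * x ^ (n + 1) * birkhoffQuot n a x)

theorem birkhoffMap_sub (hn : n ≠ 0) (ha : a ^ n = c) (hx : x ≠ 0) :
    birkhoffMap n c x - a = (x - a) ^ 2 * birkhoffQuot n a x / (n * x ^ (n - 1)) := by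
  obtain ⟨m, rfl⟩ := Nat.exists_eq_add_one_of_ne_zero hn
  rw [sub_sq_mul_birkhoffQuot, birkhoffMap, ← ha, Nat.add_sub_cancel]
  push_cast
  field_simp
  ring

theorem birkhoffMapDeriv_eq (hn : n ≠ 0) (ha : a ^ n = c) (hx : x ≠ 0) :
    birkhoffMapDeriv n c x =
      (n - 1) * ((∑ k ∈ range n, x ^ k * a ^ (n - 1 - k)) * (x - a)) / (n * x ^ n) := by
  rw [geom_sum₂_mul, birkhoffMapDeriv, ← ha]
  field_simp

theorem birkhoffMapDeriv_sq (hn : n ≠ 0) (ha : a ^ n = c) (hx : x ≠ 0)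
    (hq : birkhoffQuot n a x ≠ 0) :
    birkhoffMapDeriv n c x ^ 2 = birkhoffFactor n a x * (birkhoffMap n c x - a) := by
  obtain ⟨m, rfl⟩ := Nat.exists_eq_add_one_of_ne_zero hn
  rw [birkhoffMapDeriv_eq hn ha hx, birkhoffMap_sub hn ha hx, birkhoffFactor,
    Nat.add_sub_cancel]
  field_simp
  ring

theorem birkhoffMap_ne (hn : n ≠ 0) (ha : a ^ n = c) (hx : x ≠ 0) (hxa : x ≠ a)
    (hq : birkhoffQuot n a x ≠ 0) : birkhoffMap n c x ≠ a := by
  rw [← sub_ne_zero, birkhoffMap_sub hn ha hx]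
  exact div_ne_zero (mul_ne_zero (pow_ne_zero 2 (sub_ne_zero.2 hxa)) hq)
    (mul_ne_zero (Nat.cast_ne_zero.2 hn) (pow_ne_zero _ hx))

theorem birkhoffMap_self (hn : n ≠ 0) (ha : a ^ n = c) (ha0 : a ≠ 0) :
    birkhoffMap n c a = a := by
  simpa [sub_eq_zero] using birkhoffMap_sub hn ha ha0

end Map

section Ratio

variable {𝕜 : Type*} [NormedField 𝕜] [CharZero 𝕜] {n : ℕ} {a c : 𝕜}

theorem eventually_birkhoffQuot_ne_zero (hn : 2 ≤ n) (ha0 : a ≠ 0) :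
    ∀ᶠ x in 𝓝 a, x ≠ 0 ∧ birkhoffQuot n a x ≠ 0 :=
  (eventually_ne_nhds ha0).and
    ((continuous_birkhoffQuot n a).continuousAt.eventually_ne (birkhoffQuot_self_ne_zero hn ha0))

theorem continuousAt_birkhoffMap (hn : n ≠ 0) {x : 𝕜} (hx : x ≠ 0) :
    ContinuousAt (birkhoffMap n c) x := by
  have hden : (n : 𝕜) * x ^ (n - 1) ≠ 0 :=
    mul_ne_zero (Nat.cast_ne_zero.2 hn) (pow_ne_zero _ hx)
  unfold birkhoffMap
  fun_prop (disch := exact hden)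

theorem tendsto_birkhoffMap_nhds_self (hn : n ≠ 0) (ha : a ^ n = c) (ha0 : a ≠ 0) :
    Tendsto (birkhoffMap n c) (𝓝 a) (𝓝 a) := by
  simpa only [birkhoffMap_self hn ha ha0] using
    (continuousAt_birkhoffMap (c := c) hn ha0).tendsto

theorem continuousAt_birkhoffFactor (hn : 2 ≤ n) (ha0 : a ≠ 0) :
    ContinuousAt (birkhoffFactor n a) a := by
  have hden : (n : 𝕜) * a ^ (n + 1) * birkhoffQuot n a a ≠ 0 :=
    mul_ne_zero (mul_ne_zero (Nat.cast_ne_zero.2 (by omega)) (pow_ne_zero _ ha0))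
      (birkhoffQuot_self_ne_zero hn ha0)
  have hQ := (continuous_birkhoffQuot n a).continuousAt (x := a)
  unfold birkhoffFactor
  fun_prop (disch := exact hden)

theorem eventually_birkhoffMap_ne (hn : 2 ≤ n) (ha : a ^ n = c) (ha0 : a ≠ 0) :
    ∀ᶠ x in 𝓝[≠] a, birkhoffMap n c x ≠ a := by
  filter_upwards [self_mem_nhdsWithin,
    nhdsWithin_le_nhds (eventually_birkhoffQuot_ne_zero hn ha0)] with x hxa ⟨hx, hq⟩
  exact birkhoffMap_ne (by omega) ha hx hxa hq

theorem tendsto_norm_birkhoffMapDeriv_sq_div (hn : 2 ≤ n) (ha : a ^ n = c) (ha0 : a ≠ 0) :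
    Tendsto (fun x => ‖birkhoffMapDeriv n c x‖ ^ 2 / ‖birkhoffMap n c x - a‖) (𝓝[≠] a)
      (𝓝 ‖birkhoffFactor n a a‖) := by
  refine ((continuousAt_birkhoffFactor hn ha0).norm.tendsto.mono_left
    nhdsWithin_le_nhds).congr' ?_
  filter_upwards [self_mem_nhdsWithin,
    nhdsWithin_le_nhds (eventually_birkhoffQuot_ne_zero hn ha0)] with x hxa ⟨hx, hq⟩
  have hne : ‖birkhoffMap n c x - a‖ ≠ 0 :=
    norm_ne_zero_iff.2 (sub_ne_zero.2 (birkhoffMap_ne (by omega) ha hx hxa hq))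
  rw [← norm_pow, birkhoffMapDeriv_sq (by omega) ha hx hq, norm_mul, mul_div_cancel_right₀ _ hne]

end Ratio

section Potential

variable {α E : Type*} [SeminormedAddCommGroup E] {l : Filter α} {d : α → E} {ℓ : ℝ}

theorem tendsto_norm_sq_of_tendsto_div {F : Type*} [NormedAddCommGroup F] {f : α → F} {b : F}
    (hf : Tendsto f l (𝓝 b)) (hfb : ∀ᶠ x in l, f x ≠ b)
    (hρ : Tendsto (fun x => ‖d x‖ ^ 2 / ‖f x - b‖) l (𝓝 ℓ)) :
    Tendsto (fun x => ‖d x‖ ^ 2) l (𝓝 0) := by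
  have hdist : Tendsto (fun x => ‖f x - b‖) l (𝓝 0) := by
    simpa using (hf.sub_const b).norm
  have hprod : Tendsto (fun x => ‖d x‖ ^ 2 / ‖f x - b‖ * ‖f x - b‖) l (𝓝 0) := by
    simpa using hρ.mul hdist
  refine hprod.congr' ?_
  filter_upwards [hfb] with x hx
  exact div_mul_cancel₀ _ (norm_ne_zero_iff.2 (sub_ne_zero.2 hx))

variable {f : α → ℂ} {b : ℂ} {N : ℂ → ℂ} {r : ℝ}

theorem tendsto_collision_term {ŵ : ℂ} (hN : ContinuousAt N b) (hr : r ≠ 0) (hŵ : ŵ ≠ b)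
    (hf : Tendsto f l (𝓝 b)) (hρ : Tendsto (fun x => ‖d x‖ ^ 2 / ‖f x - b‖) l (𝓝 ℓ)) :
    Tendsto
      (fun x => ((‖d x‖ ^ 2 : ℝ) : ℂ) * (N (f x) / ((r * ‖f x - b‖ * ‖f x - ŵ‖ : ℝ) : ℂ)))
      l (𝓝 (ℓ * (N b / ((r * ‖b - ŵ‖ : ℝ) : ℂ)))) := by
  have hden : ((r * ‖b - ŵ‖ : ℝ) : ℂ) ≠ 0 :=
    Complex.ofReal_ne_zero.2 (mul_ne_zero hr (norm_ne_zero_iff.2 (sub_ne_zero.2 hŵ.symm)))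
  have hlim := (Complex.continuous_ofReal.tendsto ℓ |>.comp hρ).mul
    ((hN.tendsto.comp hf).div (Complex.continuous_ofReal.tendsto _ |>.comp
      (((hf.sub_const ŵ).norm).const_mul r)) hden)
  refine hlim.congr fun x => ?_
  simp only [Function.comp_apply, Pi.div_apply]
  push_cast
  ring

theorem tendsto_regular_term {w ŵ : ℂ} (hN : ContinuousAt N b) (hr : r ≠ 0) (hw : w ≠ b)
    (hŵ : ŵ ≠ b) (hf : Tendsto f l (𝓝 b)) (hd : Tendsto (fun x => ‖d x‖ ^ 2) l (𝓝 0)) :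
    Tendsto
      (fun x => ((‖d x‖ ^ 2 : ℝ) : ℂ) * (N (f x) / ((r * ‖f x - w‖ * ‖f x - ŵ‖ : ℝ) : ℂ)))
      l (𝓝 0) := by
  have hden : ((r * ‖b - w‖ * ‖b - ŵ‖ : ℝ) : ℂ) ≠ 0 :=
    Complex.ofReal_ne_zero.2 (mul_ne_zero
      (mul_ne_zero hr (norm_ne_zero_iff.2 (sub_ne_zero.2 hw.symm)))
      (norm_ne_zero_iff.2 (sub_ne_zero.2 hŵ.symm)))
  simpa using (Complex.continuous_ofReal.tendsto 0 |>.comp hd).mul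
    ((hN.tendsto.comp hf).div (Complex.continuous_ofReal.tendsto _ |>.comp
      ((((hf.sub_const w).norm).const_mul r).mul (hf.sub_const ŵ).norm)) hden)

theorem exists_tendsto_norm_sq_mul_potential {ι : Type*} [Fintype ι] {N : ι → ℂ → ℂ}
    {w ŵ : ι → ℂ} (hN : ∀ j, ContinuousAt (N j) b) (hr : r ≠ 0) (hŵ : ∀ j, ŵ j ≠ b)
    (hf : Tendsto f l (𝓝 b)) (hfb : ∀ᶠ x in l, f x ≠ b)
    (hρ : Tendsto (fun x => ‖d x‖ ^ 2 / ‖f x - b‖) l (𝓝 ℓ)) :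
    ∃ L, Tendsto (fun x => ((‖d x‖ ^ 2 : ℝ) : ℂ) *
      ∑ j, N j (f x) / ((r * ‖f x - w j‖ * ‖f x - ŵ j‖ : ℝ) : ℂ)) l (𝓝 L) := by
  have hterm : ∀ j, ∃ L, Tendsto (fun x => ((‖d x‖ ^ 2 : ℝ) : ℂ) *
      (N j (f x) / ((r * ‖f x - w j‖ * ‖f x - ŵ j‖ : ℝ) : ℂ))) l (𝓝 L) := by
    intro j
    by_cases hwj : w j = b
    · rw [hwj]
      exact ⟨_, tendsto_collision_term (hN j) hr (hŵ j) hf hρ⟩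
    · exact ⟨0, tendsto_regular_term (hN j) hr hwj (hŵ j) hf
        (tendsto_norm_sq_of_tendsto_div hf hfb hρ)⟩
  choose L hL using hterm
  exact ⟨∑ j, L j, by simpa only [mul_sum] using tendsto_finsetSum _ fun j _ => hL j⟩

end Potential

theorem exp_two_pi_mul_I_mul_div_pow_eq_one (j : ℕ) {n : ℕ} (hn : n ≠ 0) :
    Complex.exp (2 * π * Complex.I * j / n) ^ n = 1 := by
  rw [← Complex.exp_nat_mul, mul_div_cancel₀ _ (Nat.cast_ne_zero.2 hn), mul_comm,
    Complex.exp_nat_mul_two_pi_mul_I]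

theorem birkhoff_global_regularization_general
    (σ : ℝ) (z₀ : ℝ)
    (n : ℕ) (hn : 2 ≤ n) (w₁ : ℂ) (hw₁ : w₁ ≠ 0)
    (w : Fin n → ℂ)
    (hw : ∀ j : Fin n, w j = w₁ * Complex.exp (2 * (π : ℂ) * Complex.I * ((j : ℕ) : ℂ) / (n : ℂ)))
    (k h : Fin n → ℝ)
    (r : ℝ) (hrpos : 0 < r)
    (wHat : Fin n → ℂ)
    (hsep : ∀ i j : Fin n, wHat j ≠ w i)
    (N : Fin n → ℂ → ℂ)
    (hN : ∀ j z, N j z =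
      (k j : ℂ) * (z + (starRingEnd ℂ) z) - Complex.I * (h j : ℂ) * (z - (starRingEnd ℂ) z)
        + (σ : ℂ) * (z₀ : ℂ) * (1 - (σ : ℂ) * ((‖z‖ : ℝ) : ℂ) ^ 2))
    (V : ℂ → ℂ)
    (hV : ∀ z, V z = ∑ j, N j z /
      ((r * ‖z - w j‖ * ‖z - wHat j‖ : ℝ) : ℂ))
    (g g' : ℂ → ℂ)
    (hg : ∀ x : ℂ, g x = (((n : ℂ) - 1) / (n : ℂ)) * x + w₁ ^ n / ((n : ℂ) * x ^ (n - 1)))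
    (hg' : ∀ x : ℂ, g' x = (((n : ℂ) - 1) / (n : ℂ)) - ((n : ℂ) - 1) * w₁ ^ n / ((n : ℂ) * x ^ n))
    (i : Fin n) :
    ∃ L : ℂ, Filter.Tendsto
      (fun x : ℂ => ((‖g' x‖ ^ 2 : ℝ) : ℂ) * V (g x))
      (nhdsWithin (w i) {w i}ᶜ) (nhds L) := by
  have hn0 : n ≠ 0 := by omega
  have ha : w i ^ n = w₁ ^ n := by
    rw [hw, mul_pow, exp_two_pi_mul_I_mul_div_pow_eq_one _ hn0, mul_one]
  have ha0 : w i ≠ 0 := by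
    rw [hw]
    exact mul_ne_zero hw₁ (Complex.exp_ne_zero _)
  obtain rfl : g = birkhoffMap n (w₁ ^ n) := funext hg
  obtain rfl : g' = birkhoffMapDeriv n (w₁ ^ n) := funext hg'
  have hNcont : ∀ j, Continuous (N j) := fun j => by
    rw [funext (hN j)]
    fun_prop
  simp only [hV]
  refine exists_tendsto_norm_sq_mul_potential (fun j => (hNcont j).continuousAt) hrpos.ne'
    (fun j => hsep i j)
    ((tendsto_birkhoffMap_nhds_self hn0 ha ha0).mono_left nhdsWithin_le_nhds)
    (eventually_birkhoffMap_ne hn ha ha0) (tendsto_norm_birkhoffMapDeriv_sq_div hn ha ha0)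

/-- Birkhoff-type global regularization in the restricted curved `(n+1)`-body problem on
`S²` (`σ = +1`) or `H²` (`σ = −1`):  the `n` primaries occupy the vertices
`wⱼ = w₁ e^{2πi(j−1)/n}` of a regular `n`-gon (indexed here by `j = 0,…,n−1`), the
projections of the points `(kⱼ, hⱼ, z₀)` of the sphere/hyperboloid, with
`kⱼ = Re((1+z₀)wⱼ)`, `hⱼ = Im((1+z₀)wⱼ)`, `r = (1+z₀)|w₁| > 0`, and with auxiliary
points `ŵⱼ = −(kⱼ + i hⱼ)/(1 − z₀)` assumed distinct from all primaries.  The potential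
is `V(z) = Σⱼ Nⱼ(z)/(r |z − wⱼ| |z − ŵⱼ|)` with
`Nⱼ(z) = kⱼ(z + z̄) − i hⱼ(z − z̄) + σ z₀ (1 − σ|z|²)`.  Then, with the transformation
`z = g(w) = ((n−1)/n) w + w₁ⁿ/(n w^{n−1})` and the time rescaling `dt/ds = |g'(w)|²`,
for every `i` the function `w ↦ |g'(w)|² V(g(w))` extends continuously to `w = wᵢ`, i.e.
all `n` binary-collision singularities are removed simultaneously. -/
theorem birkhoff_global_regularization
    (σ : ℝ) (hσ : σ = 1 ∨ σ = -1) (z₀ : ℝ) (hz₀1 : z₀ ≠ 1) (hz₀2 : z₀ ≠ -1)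
    (n : ℕ) (hn : 2 ≤ n) (w₁ : ℂ) (hw₁ : w₁ ≠ 0)
    (w : Fin n → ℂ)
    (hw : ∀ j : Fin n, w j = w₁ * Complex.exp (2 * (π : ℂ) * Complex.I * ((j : ℕ) : ℂ) / (n : ℂ)))
    (k h : Fin n → ℝ)
    (hk : ∀ j, k j = (((1 + z₀ : ℝ) : ℂ) * w j).re)
    (hh : ∀ j, h j = (((1 + z₀ : ℝ) : ℂ) * w j).im)
    (r : ℝ) (hr : r = (1 + z₀) * ‖w₁‖) (hrpos : 0 < r)
    (wHat : Fin n → ℂ)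
    (hwHat : ∀ j, wHat j = -((k j : ℂ) + (h j : ℂ) * Complex.I) / (1 - (z₀ : ℂ)))
    (hsep : ∀ i j : Fin n, wHat j ≠ w i)
    (N : Fin n → ℂ → ℂ)
    (hN : ∀ j z, N j z =
      (k j : ℂ) * (z + (starRingEnd ℂ) z) - Complex.I * (h j : ℂ) * (z - (starRingEnd ℂ) z)
        + (σ : ℂ) * (z₀ : ℂ) * (1 - (σ : ℂ) * ((‖z‖ : ℝ) : ℂ) ^ 2))
    (V : ℂ → ℂ)
    (hV : ∀ z, V z = ∑ j, N j z /
      ((r * ‖z - w j‖ * ‖z - wHat j‖ : ℝ) : ℂ))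
    (g g' : ℂ → ℂ)
    (hg : ∀ x : ℂ, g x = (((n : ℂ) - 1) / (n : ℂ)) * x + w₁ ^ n / ((n : ℂ) * x ^ (n - 1)))
    (hg' : ∀ x : ℂ, g' x = (((n : ℂ) - 1) / (n : ℂ)) - ((n : ℂ) - 1) * w₁ ^ n / ((n : ℂ) * x ^ n))
    (i : Fin n) :
    ∃ L : ℂ, Filter.Tendsto
      (fun x : ℂ => ((‖g' x‖ ^ 2 : ℝ) : ℂ) * V (g x))
      (nhdsWithin (w i) {w i}ᶜ) (nhds L) :=
  birkhoff_global_regularization_general σ z₀ n hn w₁ hw₁ w hw k h r hrpos wHat hsep N hN V hV g g'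
    hg hg' i
end
end
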